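/- arXiv:1309.3094 — 4 statements merged into one kernel-verified Lean document; each statement's English description precedes it below -/
import Mathlib

section
/- Let q be a positive integer, 0 ≤ α < 1, and τ > 0. Define b_j = τ·j^{1/α} if α > 0 and b_j = e^{τj} if α = 0. Then there exists a constant C = C(τ, α) > 0 such that for every nondecreasing sequence (a_j)_{j≥q} of positive reals satisfying j + 1 ≤ a_j ≤ b_j for all j ≥ q, there exists an integer k ≥ q with a_{k+1} − a_k ≤ C·(a_k − k)^{1−α}. -/
/-!
Suppose the gap `a (k+1) - a k` always exceeds `C d_k ^ (1 - α)`, where `d_k = a k - k ≥ 1`.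
Then `d_{k+1} ≥ d_k + (C - 1) d_k ^ (1 - α)`, and a potential `φ` (`x ^ α` if `α > 0`, by
concavity of `x ↦ x ^ α`; `log x` if `α = 0`) increases by `2s` at every step, where
`s = τ ^ α`, resp. `s = τ`. But `φ (d_k) ≤ φ (b_k) ≤ s k` grows only at rate `s`, which is
absurd already at `k = 2q + 1`.
-/

open Real

noncomputable def growthBound (α τ : ℝ) (j : ℕ) : ℝ :=
  if 0 < α then τ * (j : ℝ) ^ (1 / α) else exp (τ * j)

/-- `φ` is evaluated at the excess `a k - k` of the sequence. -/
structure GrowthPotential (α τ C s : ℝ) (φ : ℝ → ℝ) : Prop where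
  nonneg : ∀ x, 1 ≤ x → 0 ≤ φ x
  le_of_le_growthBound :
    ∀ (j : ℕ) x, 1 ≤ x → x ≤ growthBound α τ j → φ x ≤ s * j
  add_le : ∀ d d', 1 ≤ d → d + (C - 1) * d ^ (1 - α) ≤ d' → φ d + 2 * s ≤ φ d'

lemma exists_succ_lt_add_of_le_mul {φ : ℕ → ℝ} {q : ℕ} {s : ℝ} (hs : 0 < s) (h0 : 0 ≤ φ q)
    (hbound : ∀ k ≥ q, φ k ≤ s * k) : ∃ k ≥ q, φ (k + 1) < φ k + 2 * s := by
  by_contra! hstep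
  have growth : ∀ n : ℕ, φ q + 2 * s * n ≤ φ (q + n) := by
    intro n
    induction n with
    | zero => simp
    | succ n ih =>
      have := hstep (q + n) (Nat.le_add_right q n)
      rw [← add_assoc]
      push_cast
      linarith
  have hlow := growth (q + 1)
  have hup := hbound (q + (q + 1)) (Nat.le_add_right q _)
  push_cast at hlow hup
  nlinarith

/-- Concavity of `t ↦ t ^ α`, applied between `1` and `C` with weight `d ^ (-α)` on `C`. -/
lemma rpow_add_sub_one_le {α C d : ℝ} (hα : 0 ≤ α) (hα1 : α ≤ 1) (hC : 1 ≤ C)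
    (hd : 1 ≤ d) :
    d ^ α + (C ^ α - 1) ≤ (d + (C - 1) * d ^ (1 - α)) ^ α := by
  have hd0 : 0 < d := by linarith
  set l := d ^ (-α)
  have hl0 : 0 < l := rpow_pos_of_pos hd0 _
  have hl1 : l ≤ 1 := rpow_le_one_of_one_le_of_nonpos hd (by linarith)
  have hconcave := (concaveOn_rpow hα hα1).2 (Set.mem_Ici.2 zero_le_one)
    (Set.mem_Ici.2 (by linarith : (0 : ℝ) ≤ C)) (by linarith : 0 ≤ 1 - l) hl0.le (by ring)
  simp only [smul_eq_mul, one_rpow, mul_one] at hconcave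
  have hdl : d ^ α * l = 1 := by rw [← rpow_add hd0]; simp
  have hsplit : d + (C - 1) * d ^ (1 - α) = d * (1 - l + l * C) := by
    rw [show 1 - α = 1 + -α by ring, rpow_add hd0, rpow_one]; ring
  rw [hsplit, mul_rpow hd0.le (by nlinarith)]
  have := mul_le_mul_of_nonneg_left hconcave (rpow_nonneg hd0.le α)
  linear_combination this - (C ^ α - 1) * hdl

lemma growthPotential_rpow {α τ : ℝ} (hα : 0 < α) (hα1 : α < 1) (hτ : 0 < τ) :
    GrowthPotential α τ ((1 + 2 * τ ^ α) ^ (1 / α)) (τ ^ α) (· ^ α) where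
  nonneg x hx := rpow_nonneg (by linarith) α
  le_of_le_growthBound j x hx hxb := by
    rw [growthBound, if_pos hα] at hxb
    calc x ^ α ≤ (τ * (j : ℝ) ^ (1 / α)) ^ α := rpow_le_rpow (by linarith) hxb hα.le
      _ = τ ^ α * j := by
        rw [mul_rpow hτ.le (by positivity), ← rpow_mul (Nat.cast_nonneg _),
          one_div_mul_cancel hα.ne', rpow_one]
  add_le d d' hd hd' := by
    have hτα : 0 < τ ^ α := rpow_pos_of_pos hτ α
    have hC : 1 ≤ (1 + 2 * τ ^ α) ^ (1 / α) := one_le_rpow (by linarith) (by positivity)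
    have hCα : ((1 + 2 * τ ^ α) ^ (1 / α)) ^ α = 1 + 2 * τ ^ α := by
      rw [← rpow_mul (by linarith), one_div_mul_cancel hα.ne', rpow_one]
    have hstep := rpow_add_sub_one_le hα.le hα1.le hC hd
    have hmono := rpow_le_rpow (by positivity) hd' hα.le
    rw [hCα] at hstep
    linarith

lemma growthPotential_log {τ : ℝ} : GrowthPotential 0 τ (exp (2 * τ)) τ log where
  nonneg x hx := log_nonneg hx
  le_of_le_growthBound j x hx hxb := by
    rw [growthBound, if_neg (lt_irrefl 0)] at hxb
    calc log x ≤ log (exp (τ * j)) := log_le_log (by linarith) hxb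
      _ = τ * j := log_exp _
  add_le d d' hd hd' := by
    have hd0 : 0 < d := by linarith
    rw [sub_zero, rpow_one] at hd'
    calc log d + 2 * τ = log (exp (2 * τ) * d) := by
          rw [log_mul (exp_pos _).ne' hd0.ne', log_exp]; ring
      _ ≤ log d' := log_le_log (by positivity) (by linarith)

lemma exists_growthPotential {α τ : ℝ} (hα0 : 0 ≤ α) (hα1 : α < 1) (hτ : 0 < τ) :
    ∃ C s : ℝ, ∃ φ : ℝ → ℝ, 0 < C ∧ 0 < s ∧ GrowthPotential α τ C s φ := by
  rcases hα0.lt_or_eq with hα | rfl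
  · exact ⟨_, _, _, rpow_pos_of_pos (by positivity) _, rpow_pos_of_pos hτ α,
      growthPotential_rpow hα hα1 hτ⟩
  · exact ⟨_, _, _, exp_pos _, hτ, growthPotential_log⟩

lemma GrowthPotential.exists_gap_le {α τ C s : ℝ} {φ : ℝ → ℝ}
    (hφ : GrowthPotential α τ C s φ) (hs : 0 < s) (hα : α ≤ 1) {q : ℕ} {a : ℕ → ℝ}
    (hb : ∀ j, q ≤ j → (j : ℝ) + 1 ≤ a j ∧ a j ≤ growthBound α τ j) :
    ∃ k, q ≤ k ∧ a (k + 1) - a k ≤ C * (a k - k) ^ (1 - α) := by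
  have hexcess : ∀ k, q ≤ k → 1 ≤ a k - k := fun k hk => by linarith [(hb k hk).1]
  obtain ⟨k, hk, hlt⟩ := exists_succ_lt_add_of_le_mul (φ := fun k => φ (a k - k)) hs
    (hφ.nonneg _ (hexcess q le_rfl)) fun k hk => hφ.le_of_le_growthBound k _ (hexcess k hk)
      (by linarith [(hb k hk).2, (Nat.cast_nonneg k : (0 : ℝ) ≤ k)])
  refine ⟨k, hk, not_lt.1 fun hgap => hlt.not_ge (hφ.add_le _ _ (hexcess k hk) ?_)⟩
  have hpow : 1 ≤ (a k - k) ^ (1 - α) := one_le_rpow (hexcess k hk) (by linarith)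
  push_cast
  linarith

theorem stmt_0_general (q : ℕ) (α τ : ℝ) (hα0 : 0 ≤ α) (hα1 : α < 1) (hτ : 0 < τ) :
    ∃ C : ℝ, 0 < C ∧ ∀ a : ℕ → ℝ,
      (∀ j, q ≤ j → 0 < a j) →
      (∀ j, q ≤ j → a j ≤ a (j + 1)) →
      (∀ j, q ≤ j → (j : ℝ) + 1 ≤ a j ∧
        a j ≤ (if 0 < α then τ * (j : ℝ) ^ (1 / α) else Real.exp (τ * j))) →
      ∃ k : ℕ, q ≤ k ∧ a (k + 1) - a k ≤ C * (a k - k) ^ (1 - α) := by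
  obtain ⟨C, s, φ, hC, hs, hφ⟩ := exists_growthPotential hα0 hα1 hτ
  exact ⟨C, hC, fun a _ _ hb => hφ.exists_gap_le hs hα1.le hb⟩

theorem stmt_0 (q : ℕ) (hq : 0 < q) (α τ : ℝ) (hα0 : 0 ≤ α) (hα1 : α < 1) (hτ : 0 < τ) :
    ∃ C : ℝ, 0 < C ∧ ∀ a : ℕ → ℝ,
      (∀ j, q ≤ j → 0 < a j) →
      (∀ j, q ≤ j → a j ≤ a (j + 1)) →
      (∀ j, q ≤ j → (j : ℝ) + 1 ≤ a j ∧
        a j ≤ (if 0 < α then τ * (j : ℝ) ^ (1 / α) else Real.exp (τ * j))) →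
      ∃ k : ℕ, q ≤ k ∧ a (k + 1) - a k ≤ C * (a k - k) ^ (1 - α) :=
  stmt_0_general q α τ hα0 hα1 hτ
end

section
/- Let Ω ⊆ ℝⁿ be open, v : Ω → [0, ∞) integrable, and φ a gauge function. Let E ⊆ Ω be a set such that for every x ∈ E, limsup_{r→0⁺} (φ(2r))^{−1} ∫_{B(x,r)} v dy > 1. Then there exists a constant C = C(n) such that for every open set U with E ⊆ U ⊆ Ω, the Hausdorff measure H^φ(E) ≤ C ∫_U v dy. -/
/-!
With the measure `μ = v · volume` restricted to `U`, the limsup hypothesis says that every point of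
`E` is the centre of arbitrarily small balls `B(x, r) ⊆ U` with `φ(2r) ≤ μ(B̄(x, r))`. Besicovitch's
covering theorem extracts from these balls countable covers of `E` of arbitrarily small mesh whose
total `μ`-mass exceeds `μ E` by at most `ε`; since `φ(diam B̄(x, r)) ≤ φ(2r)`, this gives
`H^φ(E) ≤ μ E ≤ ∫_U v`, so that one may take `C = 1`.
-/

open MeasureTheory Metric Filter

/-- A gauge function: nondecreasing, right-continuous, positive for positive arguments. -/
def IsGauge (φ : ℝ → ℝ) : Prop :=
  Monotone φ ∧ (∀ t : ℝ, 0 < t → 0 < φ t) ∧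
    ∀ t : ℝ, 0 ≤ t → ContinuousWithinAt φ (Set.Ici t) t

/-- The Hausdorff measure associated with the gauge `φ`. -/
noncomputable def hausdorffGauge {X : Type*} [EMetricSpace X] [MeasurableSpace X]
    [BorelSpace X] (φ : ℝ → ℝ) : Measure X :=
  Measure.mkMetric (fun d => ENNReal.ofReal (φ d.toReal))

open scoped ENNReal Topology

theorem Filter.frequently_lt_of_one_lt_limsup_div {ι : Type*} {l : Filter ι} [NeBot l]
    {f g : ι → ℝ} (hf : ∀ᶠ i in l, 0 ≤ f i) (hg : ∀ᶠ i in l, 0 < g i)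
    (h : 1 < limsup (fun i => f i / g i) l) : ∃ᶠ i in l, g i < f i := by
  have hcobdd : IsCoboundedUnder (· ≤ ·) l (fun i => f i / g i) :=
    isCoboundedUnder_le_of_eventually_le l (x := 0) <| by
      filter_upwards [hf, hg] with i hfi hgi using div_nonneg hfi hgi.le
  refine ((frequently_lt_of_lt_limsup hcobdd h).and_eventually hg).mono ?_
  rintro i ⟨hi, hgi⟩
  exact (one_lt_div hgi).1 hi

theorem Metric.ediam_closedBall_le {X : Type*} [PseudoMetricSpace X] (x : X) (r : ℝ) :
    ediam (closedBall x r) ≤ ENNReal.ofReal (2 * r) :=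
  ediam_le_of_forall_dist_le fun y hy z hz =>
    (dist_triangle_right y z x).trans (by linarith [mem_closedBall.1 hy, mem_closedBall.1 hz])

theorem MeasureTheory.withDensity_ofReal_restrict_apply {α : Type*} [MeasurableSpace α]
    {μ : Measure α} {v : α → ℝ} {U s : Set α} (hv : ∀ x, 0 ≤ v x) (hvU : IntegrableOn v U μ)
    (hs : MeasurableSet s) (hsU : s ⊆ U) :
    (μ.restrict U).withDensity (fun x => ENNReal.ofReal (v x)) s
      = ENNReal.ofReal (∫ x in s, v x ∂μ) := by
  rw [withDensity_apply _ hs, Measure.restrict_restrict hs, Set.inter_eq_self_of_subset_left hsU,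
    ofReal_integral_eq_lintegral_ofReal (hvU.mono_set hsU) (ae_of_all _ hv)]

theorem frequently_ofReal_le_withDensity_closedBall {X : Type*} [PseudoMetricSpace X]
    [MeasurableSpace X] [OpensMeasurableSpace X] {μ : Measure X} {v : X → ℝ} {U : Set X}
    {φ : ℝ → ℝ} {x : X} (hv : ∀ y, 0 ≤ v y) (hvU : IntegrableOn v U μ)
    (hφ : ∀ t, 0 < t → 0 < φ t) (hxU : U ∈ 𝓝 x)
    (hx : 1 < limsup (fun r => (∫ y in ball x r, v y ∂μ) / φ (2 * r)) (𝓝[>] 0)) :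
    ∃ᶠ r in 𝓝[>] 0, ENNReal.ofReal (φ (2 * r))
      ≤ (μ.restrict U).withDensity (fun y => ENNReal.ofReal (v y)) (closedBall x r) := by
  obtain ⟨R, hR, hRU⟩ := Metric.mem_nhds_iff.1 hxU
  have hφ_pos : ∀ᶠ r in 𝓝[>] (0 : ℝ), 0 < φ (2 * r) := by
    filter_upwards [self_mem_nhdsWithin] with r (hr : 0 < r) using hφ _ (by linarith)
  have hlt := frequently_lt_of_one_lt_limsup_div
    (Eventually.of_forall fun r => integral_nonneg fun y => hv y) hφ_pos hx
  refine (hlt.and_eventually (Ioo_mem_nhdsGT hR)).mono fun r ⟨hr, _, hrR⟩ => ?_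
  calc ENNReal.ofReal (φ (2 * r)) ≤ ENNReal.ofReal (∫ y in ball x r, v y ∂μ) :=
        ENNReal.ofReal_le_ofReal hr.le
    _ = (μ.restrict U).withDensity (fun y => ENNReal.ofReal (v y)) (ball x r) :=
        (withDensity_ofReal_restrict_apply hv hvU measurableSet_ball
          ((ball_subset_ball hrR.le).trans hRU)).symm
    _ ≤ _ := measure_mono ball_subset_closedBall

section Covering

variable {X : Type*} [MetricSpace X] [SecondCountableTopology X] [HasBesicovitchCovering X]
  [MeasurableSpace X] [BorelSpace X]

theorem exists_closedBall_covering_tsum_gauge_le (μ : Measure X) [SFinite μ] [μ.OuterRegular]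
    {φ : ℝ → ℝ} {E : Set X}
    (hE : ∀ x ∈ E, ∃ᶠ r in 𝓝[>] 0, ENNReal.ofReal (φ (2 * r)) ≤ μ (closedBall x r))
    {ε : ℝ≥0∞} (hε : ε ≠ 0) {δ : ℝ} (hδ : 0 < δ) :
    ∃ (t : Set X) (r : X → ℝ), t.Countable ∧ (∀ x ∈ t, 0 < r x ∧ r x < δ) ∧
      E ⊆ ⋃ x ∈ t, closedBall x (r x) ∧ ∑' x : t, ENNReal.ofReal (φ (2 * r x)) ≤ μ E + ε := by
  set f : X → Set ℝ := fun x =>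
    {r | r ∈ Set.Ioo 0 δ ∧ ENNReal.ofReal (φ (2 * r)) ≤ μ (closedBall x r)}
  have hf : ∀ x ∈ E, ∀ η > 0, (f x ∩ Set.Ioo 0 η).Nonempty := fun x hx η hη =>
    ((hE x hx).and_eventually (Ioo_mem_nhdsGT (lt_min hδ hη))).exists.imp
      fun r ⟨hr, hr0, hrδη⟩ =>
        ⟨⟨⟨hr0, hrδη.trans_le (min_le_left _ _)⟩, hr⟩, hr0, hrδη.trans_le (min_le_right _ _)⟩
  obtain ⟨t, r, ht, -, hr, hcover, hsum⟩ :=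
    Besicovitch.exists_closedBall_covering_tsum_measure_le μ hε f E hf
  exact ⟨t, r, ht, fun x hx => (hr x hx).1, hcover,
    (ENNReal.tsum_le_tsum fun x : t => (hr x x.2).2).trans hsum⟩

theorem hausdorffGauge_le_of_frequently_le_measure_closedBall (μ : Measure X) [SFinite μ] [μ.OuterRegular]
    {φ : ℝ → ℝ} (hφ : Monotone φ) {E : Set X}
    (hE : ∀ x ∈ E, ∃ᶠ r in 𝓝[>] 0, ENNReal.ofReal (φ (2 * r)) ≤ μ (closedBall x r)) :
    hausdorffGauge φ E ≤ μ E := by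
  refine ENNReal.le_of_forall_pos_le_add fun ε hε _ => ?_
  obtain ⟨δ, -, hδ, hδ_lim⟩ := exists_seq_strictAnti_tendsto (0 : ℝ)
  choose t r ht hr hcover hsum using fun k =>
    exists_closedBall_covering_tsum_gauge_le μ hE (ENNReal.coe_ne_zero.2 hε.ne') (hδ k)
  have := fun k => (ht k).to_subtype
  have hmesh : Tendsto (fun k => ENNReal.ofReal (2 * δ k)) atTop (𝓝 0) := by
    simpa using ENNReal.tendsto_ofReal (hδ_lim.const_mul 2)
  refine (Measure.mkMetric_le_liminf_tsum E _ hmesh (fun k (x : t k) => closedBall x (r k x))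
    (Eventually.of_forall fun k x =>
      (ediam_closedBall_le _ _).trans (ENNReal.ofReal_le_ofReal (by linarith [(hr k x x.2).2])))
    (Eventually.of_forall fun k => by simpa only [Set.iUnion_subtype] using hcover k) _).trans ?_
  refine liminf_le_of_frequently_le' (Frequently.of_forall fun k => ?_)
  refine le_trans (ENNReal.tsum_le_tsum fun x : t k => ENNReal.ofReal_le_ofReal (hφ ?_)) (hsum k)
  exact diam_closedBall (hr k x x.2).1.le

end Covering

theorem stmt_4_general (n : ℕ) :
    ∃ C : ℝ, 0 < C ∧
      ∀ (Ω : Set (EuclideanSpace ℝ (Fin n))), IsOpen Ω →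
      ∀ (v : EuclideanSpace ℝ (Fin n) → ℝ), (∀ x, 0 ≤ v x) → IntegrableOn v Ω volume →
      ∀ (φ : ℝ → ℝ), IsGauge φ →
      ∀ (E : Set (EuclideanSpace ℝ (Fin n))), E ⊆ Ω →
        (∀ x ∈ E, 1 < Filter.limsup
            (fun r : ℝ => (∫ y in ball x r, v y) / φ (2 * r))
            (nhdsWithin 0 (Set.Ioi 0))) →
        ∀ U : Set (EuclideanSpace ℝ (Fin n)), IsOpen U → E ⊆ U → U ⊆ Ω →
          hausdorffGauge φ E ≤ ENNReal.ofReal (C * ∫ y in U, v y) := by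
  refine ⟨1, one_pos, fun Ω _ v hv hvΩ φ hφ E _ hE U hU hEU hUΩ => ?_⟩
  have hvU : IntegrableOn v U := hvΩ.mono_set hUΩ
  set μ := (volume.restrict U).withDensity fun y => ENNReal.ofReal (v y)
  have := isFiniteMeasure_withDensity_ofReal hvU.2
  have hE_dense : ∀ x ∈ E, ∃ᶠ r in 𝓝[>] 0, ENNReal.ofReal (φ (2 * r)) ≤ μ (closedBall x r) :=
    fun x hx => frequently_ofReal_le_withDensity_closedBall hv hvU hφ.2.1
      (hU.mem_nhds (hEU hx)) (hE x hx)
  calc hausdorffGauge φ E ≤ μ E :=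
        hausdorffGauge_le_of_frequently_le_measure_closedBall μ hφ.1 hE_dense
    _ ≤ μ U := measure_mono hEU
    _ = ENNReal.ofReal (1 * ∫ y in U, v y) := by
        rw [one_mul, withDensity_ofReal_restrict_apply hv hvU hU.measurableSet subset_rfl]

theorem stmt_4 (n : ℕ) (hn : 2 ≤ n) :
    ∃ C : ℝ, 0 < C ∧
      ∀ (Ω : Set (EuclideanSpace ℝ (Fin n))), IsOpen Ω →
      ∀ (v : EuclideanSpace ℝ (Fin n) → ℝ), (∀ x, 0 ≤ v x) → IntegrableOn v Ω volume →
      ∀ (φ : ℝ → ℝ), IsGauge φ →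
      ∀ (E : Set (EuclideanSpace ℝ (Fin n))), E ⊆ Ω →
        (∀ x ∈ E, 1 < Filter.limsup
            (fun r : ℝ => (∫ y in ball x r, v y) / φ (2 * r))
            (nhdsWithin 0 (Set.Ioi 0))) →
        ∀ U : Set (EuclideanSpace ℝ (Fin n)), IsOpen U → E ⊆ U → U ⊆ Ω →
          hausdorffGauge φ E ≤ ENNReal.ofReal (C * ∫ y in U, v y) :=
  stmt_4_general n
end

section
/- Fix 0 < α ≤ 1 and μ > 0, and define ψ(r) = exp(−μ·log^α(1/r)) and φ(r) = exp(−(n+1)μ·log^α(1/r)) for 0 < r < 1. Then there exists R₀ = R₀(α, μ) > 0 such that ψ(2r) − ψ(r) ≥ (φ(r))^{1/n} for all 0 < r < R₀. -/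
/-!
With `L = log (1/r)`, convexity of `exp` gives
`ψ(2r) - ψ(r) ≥ ψ(r) · μ (L^α - (L - log 2)^α)`, and concavity of `t ↦ t^α` (Bernoulli)
bounds the bracket below by `α log 2 · L^(α-1) ≥ α log 2 / L`. On the other side
`φ(r)^(1/n) = ψ(r) · exp (-μ L^α / n)`, and `L · exp (-μ L^α / n) → 0` as `L → ∞`.
-/

open Real Filter Topology

lemma exp_neg_mul_sub_le_exp_neg_sub_exp_neg (a b : ℝ) :
    exp (-a) * (a - b) ≤ exp (-b) - exp (-a) := by
  have h : exp (-b) = exp (-a) * exp (a - b) := by rw [← exp_add]; ring_nf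
  nlinarith [add_one_le_exp (a - b), exp_pos (-a)]

lemma mul_mul_rpow_sub_one_le_rpow_sub_rpow {α h L : ℝ} (hα0 : 0 ≤ α) (hα1 : α ≤ 1)
    (hL : 0 < L) (hhL : h ≤ L) :
    α * h * L ^ (α - 1) ≤ L ^ α - (L - h) ^ α := by
  have hbern : (1 + -(h / L)) ^ α ≤ 1 + α * -(h / L) :=
    rpow_one_add_le_one_add_mul_self (by rw [neg_le_neg_iff, div_le_one hL]; exact hhL) hα0 hα1
  have hsplit : (L - h) ^ α = L ^ α * (1 + -(h / L)) ^ α := by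
    rw [← mul_rpow hL.le (by rw [← sub_eq_add_neg, sub_nonneg, div_le_one hL]; exact hhL)]
    congr 1
    field_simp
    ring
  calc α * h * L ^ (α - 1) = L ^ α - L ^ α * (1 + α * -(h / L)) := by
        rw [rpow_sub_one hL.ne']; field_simp; ring
    _ ≤ L ^ α - (L - h) ^ α := by
        rw [hsplit]; gcongr

lemma tendsto_mul_exp_neg_mul_rpow_atTop_nhds_zero {a α : ℝ} (ha : 0 < a) (hα : 0 < α) :
    Tendsto (fun L : ℝ => L * exp (-(a * L ^ α))) atTop (𝓝 0) := by
  refine ((tendsto_rpow_mul_exp_neg_mul_atTop_nhds_zero α⁻¹ a ha).comp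
    (tendsto_rpow_atTop hα)).congr' ?_
  filter_upwards [eventually_ge_atTop 0] with L hL
  simp [rpow_rpow_inv hL hα.ne']

lemma le_exp_neg_mul_sub_rpow_sub_exp_neg_mul_rpow {n μ α h L : ℝ} (hn : 0 < n) (hμ : 0 ≤ μ)
    (hα0 : 0 ≤ α) (hα1 : α ≤ 1) (hh : 0 ≤ h) (hL : 1 ≤ L) (hhL : h ≤ L)
    (hsmall : L * exp (-(μ / n * L ^ α)) ≤ μ * α * h) :
    exp (-((n + 1) * μ * L ^ α) * (1 / n)) ≤ exp (-(μ * (L - h) ^ α)) - exp (-(μ * L ^ α)) := by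
  have hL0 : 0 < L := by linarith
  have hrpow : L ^ (-1 : ℝ) ≤ L ^ (α - 1) := rpow_le_rpow_of_exponent_le hL (by linarith)
  rw [rpow_neg_one] at hrpow
  calc exp (-((n + 1) * μ * L ^ α) * (1 / n))
      = exp (-(μ * L ^ α)) * exp (-(μ / n * L ^ α)) := by
        rw [← exp_add]; congr 1; field_simp; ring
    _ ≤ exp (-(μ * L ^ α)) * (μ * α * h * L⁻¹) := by
        gcongr
        rw [← div_eq_mul_inv, le_div_iff₀ hL0, mul_comm]
        exact hsmall
    _ ≤ exp (-(μ * L ^ α)) * (μ * α * h * L ^ (α - 1)) := by gcongr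
    _ ≤ exp (-(μ * L ^ α)) * (μ * L ^ α - μ * (L - h) ^ α) := by
        rw [mul_assoc μ, mul_assoc μ, ← mul_sub]
        gcongr
        exact mul_mul_rpow_sub_one_le_rpow_sub_rpow hα0 hα1 hL0 hhL
    _ ≤ exp (-(μ * (L - h) ^ α)) - exp (-(μ * L ^ α)) :=
        exp_neg_mul_sub_le_exp_neg_sub_exp_neg _ _

theorem stmt_6 (n : ℕ) (hn : 2 ≤ n) (α μ : ℝ) (hα0 : 0 < α) (hα1 : α ≤ 1) (hμ : 0 < μ) :
    ∃ R₀ : ℝ, 0 < R₀ ∧ ∀ r : ℝ, 0 < r → r < R₀ →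
      Real.exp (-(μ * Real.log (1 / (2 * r)) ^ α)) - Real.exp (-(μ * Real.log (1 / r) ^ α))
        ≥ (Real.exp (-((n + 1 : ℝ) * μ * Real.log (1 / r) ^ α))) ^ ((1 : ℝ) / n) := by
  have hn0 : (0 : ℝ) < n := by positivity
  have hlog2 : 0 < log 2 := log_pos one_lt_two
  have hlog_inv : Tendsto (fun r : ℝ => log (1 / r)) (𝓝[>] 0) atTop := by
    simpa only [one_div, Function.comp_def] using tendsto_log_atTop.comp tendsto_inv_nhdsGT_zero
  have hsmall : ∀ᶠ L in atTop, 1 ≤ L ∧ log 2 ≤ L ∧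
      L * exp (-(μ / n * L ^ α)) ≤ μ * α * log 2 :=
    (eventually_ge_atTop 1).and <| (eventually_ge_atTop _).and <|
      (tendsto_mul_exp_neg_mul_rpow_atTop_nhds_zero (by positivity) hα0).eventually
        (ge_mem_nhds (by positivity))
  obtain ⟨R₀, hR₀, hR⟩ := (nhdsGT_basis 0).eventually_iff.mp (hlog_inv.eventually hsmall)
  refine ⟨R₀, hR₀, fun r hr hrR => ?_⟩
  obtain ⟨hL1, hL2, hLsmall⟩ := hR ⟨hr, hrR⟩
  have hlog_two_mul : log (1 / (2 * r)) = log (1 / r) - log 2 := by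
    rw [one_div, one_div, mul_inv, log_mul (by positivity) (by positivity), log_inv, log_inv]
    ring
  rw [hlog_two_mul, ← exp_mul]
  exact le_exp_neg_mul_sub_rpow_sub_exp_neg_mul_rpow hn0 hμ.le hα0.le hα1 hlog2.le hL1 hL2 hLsmall
end

section
/- Let Ω ⊆ ℝⁿ be open and f : Ω → ℝᵈ continuous. Suppose φ is a gauge function and K' ⊆ Ω is a compact set with H^φ(K') = 0 and H^n(f(K')) > 0, and suppose K' ⊆ I for a closed dyadic cube I such that H^n(f(∂J ∩ K')) = 0 for every dyadic subcube J of I. Then there exists a compact, perfect, totally disconnected set K ⊆ K' with H^φ(K) = 0 and H^n(f(K)) > 0. -/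
open MeasureTheory Metric

/-- The closed dyadic cube in `ℝⁿ` of generation `k` with corner index `a`:
its side length is `2^{-k}`. -/
def dyadicCube (n : ℕ) (k : ℤ) (a : Fin n → ℤ) : Set (EuclideanSpace ℝ (Fin n)) :=
  {x | ∀ i : Fin n, (a i : ℝ) * (2 : ℝ) ^ (-k) ≤ x i ∧ x i ≤ ((a i : ℝ) + 1) * (2 : ℝ) ^ (-k)}

/-!
Delete from `K'` a small open neighbourhood of each set `∂J ∩ K'`, `J` a dyadic subcube of `I`.
What remains is compact and misses every dyadic hyperplane `{x | x i * 2 ^ k' ∈ ℤ}` through `I`,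
so it is totally disconnected; and since every `f (∂J ∩ K')` is `μH[n]`-null, its image still has
positive measure. The neighbourhoods are chosen in the image and measured by the Hausdorff content
at a fixed scale, which, unlike `μH[n]`, is finite on bounded sets and has open neighbourhoods of
null sets of arbitrarily small content. Finally the Cantor–Bendixson theorem discards a countable
set, whose image is `μH[n]`-null, and leaves a perfect one.
-/

open ENNReal
open scoped NNReal

section HausdorffContent

variable {X : Type*} [EMetricSpace X] {d : ℝ} {r : ℝ≥0∞} {s : Set X}

/-- The Hausdorff content of dimension `d` at scale `r`: the infimum of `∑ ediam (t i) ^ d` over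
countable covers by sets of diameter at most `r`. -/
noncomputable def hausdorffContent (d : ℝ) (r : ℝ≥0∞) : OuterMeasure X :=
  OuterMeasure.mkMetric'.pre (fun s => ediam s ^ d) r

lemma hausdorffContent_le_ediam_rpow (hs : ediam s ≤ r) : hausdorffContent d r s ≤ ediam s ^ d :=
  OuterMeasure.mkMetric'.pre_le hs

variable [MeasurableSpace X] [BorelSpace X]

lemma hausdorffMeasure_eq_iSup_hausdorffContent (d : ℝ) (s : Set X) :
    μH[d] s = ⨆ r > 0, hausdorffContent d r s := by
  simp only [Measure.hausdorffMeasure, ← OuterMeasure.coe_mkMetric, OuterMeasure.mkMetric,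
    OuterMeasure.mkMetric', OuterMeasure.iSup_apply, hausdorffContent]

lemma hausdorffContent_le_hausdorffMeasure (hr : 0 < r) (d : ℝ) (s : Set X) :
    hausdorffContent d r s ≤ μH[d] s := by
  rw [hausdorffMeasure_eq_iSup_hausdorffContent]
  exact le_iSup₂_of_le r hr le_rfl

lemma exists_hausdorffContent_pos (h : 0 < μH[d] s) : ∃ r > 0, 0 < hausdorffContent d r s := by
  simpa only [hausdorffMeasure_eq_iSup_hausdorffContent, lt_iSup_iff, exists_prop] using h

lemma exists_cover_of_hausdorffMeasure_eq_zero (hd : 0 < d) (hs : μH[d] s = 0) (hr : 0 < r)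
    {c : ℝ≥0∞} (hc : c ≠ 0) :
    ∃ t : ℕ → Set X, s ⊆ ⋃ i, t i ∧ (∀ i, ediam (t i) ≤ r) ∧ ∑' i, ediam (t i) ^ d < c := by
  have hlt : (⨅ (t : ℕ → Set X) (_ : s ⊆ ⋃ i, t i) (_ : ∀ i, ediam (t i) ≤ r),
      ∑' i, ⨆ _ : (t i).Nonempty, ediam (t i) ^ d) < c := by
    refine lt_of_le_of_lt ?_ (pos_iff_ne_zero.2 hc)
    rw [← hs, Measure.hausdorffMeasure_apply]
    exact le_iSup₂_of_le r hr le_rfl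
  simp only [iInf_lt_iff] at hlt
  obtain ⟨t, hst, htr, hsum⟩ := hlt
  refine ⟨t, hst, htr, lt_of_le_of_lt (ENNReal.tsum_le_tsum fun i => ?_) hsum⟩
  rcases (t i).eq_empty_or_nonempty with h | h
  · simp [h, hd]
  · exact le_iSup_of_le h le_rfl

/-- Thicken the sets of a cover with small `∑ ediam (t i) ^ d`. -/
lemma exists_isOpen_hausdorffContent_lt (hd : 0 < d) (hr : 0 < r) (hs : μH[d] s = 0)
    {ε : ℝ≥0∞} (hε : ε ≠ 0) : ∃ U, IsOpen U ∧ s ⊆ U ∧ hausdorffContent d r U < ε := by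
  have h2d : (2 : ℝ≥0∞) ^ d ≠ 0 := (ENNReal.rpow_pos two_pos ofNat_ne_top).ne'
  have h2d' : (2 : ℝ≥0∞) ^ d ≠ ∞ := ENNReal.rpow_ne_top_of_nonneg hd.le ofNat_ne_top
  set c := ε / (2 ^ d * 2)
  have hc : c ≠ 0 := ENNReal.div_ne_zero.2 ⟨hε, ENNReal.mul_ne_top h2d' ofNat_ne_top⟩
  obtain ⟨t, hst, htr, htsum⟩ :=
    exists_cover_of_hausdorffMeasure_eq_zero hd hs (ENNReal.half_pos hr.ne') hc
  -- `η i < (r / 2) ^ d` keeps the thickened sets of diameter at most `r`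
  have hη : min c ((r / 2) ^ d) ≠ 0 := (lt_min (pos_iff_ne_zero.2 hc)
    (ENNReal.rpow_pos_of_nonneg (ENNReal.half_pos hr.ne') hd.le)).ne'
  obtain ⟨η, hη0, hηsum⟩ := ENNReal.exists_pos_sum_of_countable hη ℕ
  set ρ : ℕ → ℝ≥0 := fun i => η i ^ d⁻¹
  have hρd (i : ℕ) : (ρ i : ℝ≥0∞) ^ d = η i := by
    rw [← ENNReal.coe_rpow_of_nonneg _ hd.le, NNReal.rpow_inv_rpow hd.ne']
  have hρr (i : ℕ) : (ρ i : ℝ≥0∞) ≤ r / 2 := by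
    refine ((ENNReal.rpow_lt_rpow_iff hd).1 ?_).le
    rw [hρd]
    exact (ENNReal.le_tsum i).trans_lt (hηsum.trans_le (min_le_right _ _))
  have hpiece (i : ℕ) : hausdorffContent d r (Metric.thickening (ρ i / 2 : ℝ≥0) (t i)) ≤
      2 ^ d * (ediam (t i) ^ d + η i) := by
    have hdiam : ediam (Metric.thickening (ρ i / 2 : ℝ≥0) (t i)) ≤ ediam (t i) + ρ i := by
      refine (Metric.ediam_thickening_le _).trans_eq ?_
      rw [ENNReal.coe_div two_ne_zero, ENNReal.coe_ofNat,
        ENNReal.mul_div_cancel two_ne_zero ofNat_ne_top]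
    calc hausdorffContent d r (Metric.thickening (ρ i / 2 : ℝ≥0) (t i))
        ≤ ediam (Metric.thickening (ρ i / 2 : ℝ≥0) (t i)) ^ d := by
          refine hausdorffContent_le_ediam_rpow (hdiam.trans ?_)
          exact (add_le_add (htr i) (hρr i)).trans (ENNReal.add_halves r).le
      _ ≤ (ediam (t i) + ρ i) ^ d := ENNReal.rpow_le_rpow hdiam hd.le
      _ ≤ 2 ^ d * (ediam (t i) ^ d + η i) := by
          rw [← hρd]; exact ENNReal.add_rpow_le_two_rpow_mul_rpow_add_rpow _ _ hd.le
  refine ⟨⋃ i, Metric.thickening (ρ i / 2 : ℝ≥0) (t i), isOpen_iUnion fun _ =>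
    Metric.isOpen_thickening, hst.trans (Set.iUnion_mono fun i => Metric.self_subset_thickening
      (by have := hη0 i; positivity) _), ?_⟩
  calc hausdorffContent d r (⋃ i, Metric.thickening (ρ i / 2 : ℝ≥0) (t i))
      ≤ ∑' i, hausdorffContent d r (Metric.thickening (ρ i / 2 : ℝ≥0) (t i)) :=
        measure_iUnion_le _
    _ ≤ ∑' i, 2 ^ d * (ediam (t i) ^ d + η i) := ENNReal.tsum_le_tsum hpiece
    _ = 2 ^ d * (∑' i, ediam (t i) ^ d + ∑' i, (η i : ℝ≥0∞)) := by
        rw [ENNReal.tsum_mul_left, ENNReal.tsum_add]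
    _ < 2 ^ d * (c + c) :=
        ENNReal.mul_lt_mul_right h2d h2d' <|
          ENNReal.add_lt_add htsum (hηsum.trans_le (min_le_left _ _))
    _ = ε := by
        rw [← two_mul, ← mul_assoc, ENNReal.mul_div_cancel (mul_ne_zero h2d two_ne_zero)
          (ENNReal.mul_ne_top h2d' ofNat_ne_top)]

end HausdorffContent

lemma exists_perfect_subset_hausdorffMeasure_image_pos {X Y : Type*} [TopologicalSpace X]
    [SecondCountableTopology X] [EMetricSpace Y] [MeasurableSpace Y] [BorelSpace Y] {d : ℝ}
    (hd : 0 < d) {C : Set X} (hC : IsClosed C) (f : X → Y) (h : 0 < μH[d] (f '' C)) :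
    ∃ P ⊆ C, Perfect P ∧ 0 < μH[d] (f '' P) := by
  obtain ⟨V, P, hV, hP, rfl⟩ := exists_countable_union_perfect_of_isClosed hC
  have := Measure.nullSingletonClass_hausdorff (X := Y) hd
  refine ⟨P, Set.subset_union_right, hP, ?_⟩
  calc 0 < μH[d] (f '' V ∪ f '' P) := by rwa [← Set.image_union]
    _ ≤ μH[d] (f '' V) + μH[d] (f '' P) := measure_union_le _ _
    _ = μH[d] (f '' P) := by rw [(hV.image f).measure_zero, zero_add]

lemma exists_isCompact_subset_disjoint_hausdorffMeasure_image_pos {X Y ι : Type*}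
    [TopologicalSpace X] [T2Space X] [EMetricSpace Y] [MeasurableSpace Y] [BorelSpace Y]
    [Countable ι] {d : ℝ} (hd : 0 < d) {f : X → Y} {K : Set X} (hK : IsCompact K)
    (hf : ContinuousOn f K) (hfK : 0 < μH[d] (f '' K)) {B : ι → Set X}
    (hB : ∀ j, μH[d] (f '' B j) = 0) :
    ∃ L ⊆ K, IsCompact L ∧ (∀ j, Disjoint L (B j)) ∧ 0 < μH[d] (f '' L) := by
  obtain ⟨r, hr, hcK⟩ := exists_hausdorffContent_pos hfK
  obtain ⟨δ, hδ0, hδsum⟩ := ENNReal.exists_pos_sum_of_countable' hcK.ne' ι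
  choose V hVo hBV hVδ using fun j => exists_isOpen_hausdorffContent_lt hd hr (hB j) (hδ0 j).ne'
  set L := K ∩ f ⁻¹' (⋃ j, V j)ᶜ
  have hLc : IsCompact L := hK.of_isClosed_subset
    (hf.preimage_isClosed_of_isClosed hK.isClosed (isOpen_iUnion hVo).isClosed_compl)
    Set.inter_subset_left
  have hcover : f '' K ⊆ f '' L ∪ ⋃ j, V j := by
    rintro _ ⟨x, hx, rfl⟩
    by_cases hxV : f x ∈ ⋃ j, V j
    · exact Or.inr hxV
    · exact Or.inl ⟨x, ⟨hx, hxV⟩, rfl⟩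
  have hcL : hausdorffContent d r (f '' L) ≠ 0 := by
    intro h0
    refine (hδsum.trans_le' ?_).false
    calc hausdorffContent d r (f '' K)
        ≤ hausdorffContent d r (f '' L) + ∑' j, hausdorffContent d r (V j) :=
          (measure_mono hcover).trans <|
            (measure_union_le _ _).trans (add_le_add le_rfl (measure_iUnion_le _))
      _ ≤ ∑' j, δ j := by rw [h0, zero_add]; exact ENNReal.tsum_le_tsum fun j => (hVδ j).le
  refine ⟨L, Set.inter_subset_left, hLc, fun j => Set.disjoint_left.2 fun x hxL hxB => ?_,
    (pos_iff_ne_zero.2 hcL).trans_le (hausdorffContent_le_hausdorffMeasure hr _ _)⟩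
  exact hxL.2 (Set.mem_iUnion.2 ⟨j, hBV j ⟨x, hxB, rfl⟩⟩)

section Dyadic

variable {n : ℕ}

lemma mem_dyadicCube_iff {k : ℤ} {a : Fin n → ℤ} {x : EuclideanSpace ℝ (Fin n)} :
    x ∈ dyadicCube n k a ↔ ∀ i, (a i : ℝ) ≤ x i * 2 ^ k ∧ x i * 2 ^ k ≤ a i + 1 := by
  have h : (0 : ℝ) < 2 ^ k := by positivity
  simp only [dyadicCube, Set.mem_ofPred_eq, zpow_neg, ← div_eq_mul_inv, div_le_iff₀ h,
    le_div_iff₀ h]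

lemma isClosed_dyadicCube (k : ℤ) (a : Fin n → ℤ) : IsClosed (dyadicCube n k a) := by
  simp only [dyadicCube, Set.ofPred_forall, Set.ofPred_and]
  exact isClosed_iInter fun i =>
    (isClosed_le continuous_const (by fun_prop)).inter (isClosed_le (by fun_prop) continuous_const)

lemma mem_frontier_dyadicCube {k : ℤ} {a : Fin n → ℤ} {x : EuclideanSpace ℝ (Fin n)}
    (hx : x ∈ dyadicCube n k a) (i : Fin n) (hxi : x i * 2 ^ k = a i ∨ x i * 2 ^ k = a i + 1) :
    x ∈ frontier (dyadicCube n k a) := by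
  rw [(isClosed_dyadicCube k a).frontier_eq]
  refine ⟨hx, fun hint => ?_⟩
  obtain ⟨ε, hε, hball⟩ := Metric.isOpen_iff.1 isOpen_interior x hint
  have hmem (t : ℝ) (ht : |t| < ε) :
      (x i + t) * 2 ^ k ∈ Set.Icc (a i : ℝ) (a i + 1) := by
    have hy : x + EuclideanSpace.single i t ∈ Metric.ball x ε := by
      simpa [dist_self_add_left] using ht
    simpa using mem_dyadicCube_iff.1 (interior_subset (hball hy)) i
  have h2k : (0 : ℝ) < 2 ^ k := by positivity
  rcases hxi with h | h
  · have := (hmem (-(ε / 2)) (by rw [abs_neg, abs_of_pos (half_pos hε)]; linarith)).1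
    nlinarith
  · have := (hmem (ε / 2) (by rw [abs_of_pos (half_pos hε)]; linarith)).2
    nlinarith

lemma mem_dyadicCube_floor (k : ℤ) (x : EuclideanSpace ℝ (Fin n)) :
    x ∈ dyadicCube n k (fun i => ⌊x i * 2 ^ k⌋) :=
  mem_dyadicCube_iff.2 fun _ => ⟨Int.floor_le _, (Int.lt_floor_add_one _).le⟩

/-- `fun i => ⌊x i * 2 ^ k⌋` indexes the generation-`k` dyadic cube containing `x`. -/
lemma dyadicCube_floor_subset {k k' : ℤ} (hk : k ≤ k') (x : EuclideanSpace ℝ (Fin n)) :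
    dyadicCube n k' (fun i => ⌊x i * 2 ^ k'⌋) ⊆ dyadicCube n k (fun i => ⌊x i * 2 ^ k⌋) := by
  obtain ⟨e, rfl⟩ := Int.le.dest hk
  intro y hy
  rw [mem_dyadicCube_iff] at hy ⊢
  intro i
  set u := x i * 2 ^ k
  set v := y i * 2 ^ k
  have hN : (0 : ℝ) < 2 ^ e := by positivity
  have hscale (w : ℝ) : w * 2 ^ (k + e : ℤ) = w * 2 ^ k * 2 ^ e := by
    rw [zpow_add₀ two_ne_zero, zpow_natCast, mul_assoc]
  obtain ⟨hlo, hhi⟩ := hy i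
  simp only [hscale] at hlo hhi
  have hfloor_lo : ((⌊u⌋ * 2 ^ e : ℤ) : ℝ) ≤ ⌊u * 2 ^ e⌋ := by
    refine Int.cast_le.2 (Int.le_floor.2 ?_)
    push_cast
    exact mul_le_mul_of_nonneg_right (Int.floor_le u) hN.le
  have hfloor_hi : ((⌊u * 2 ^ e⌋ + 1 : ℤ) : ℝ) ≤ ((⌊u⌋ + 1) * 2 ^ e : ℤ) := by
    refine Int.cast_le.2 (Int.add_one_le_iff.2 (Int.floor_lt.2 ?_))
    push_cast
    exact mul_lt_mul_of_pos_right (Int.lt_floor_add_one u) hN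
  push_cast at hfloor_lo hfloor_hi
  exact ⟨le_of_mul_le_mul_right (hfloor_lo.trans hlo) hN,
    le_of_mul_le_mul_right (hhi.trans hfloor_hi) hN⟩


lemma exists_dyadicCube_subset_mem_frontier {k k' : ℤ} {a : Fin n → ℤ}
    {z : EuclideanSpace ℝ (Fin n)} (hz : z ∈ dyadicCube n k a) (hk : k ≤ k') {i : Fin n} {m : ℤ}
    (hm : z i * 2 ^ k' = m) :
    ∃ k'' a', k ≤ k'' ∧ dyadicCube n k'' a' ⊆ dyadicCube n k a ∧
      z ∈ frontier (dyadicCube n k'' a') := by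
  by_cases hfr : z ∈ frontier (dyadicCube n k a)
  · exact ⟨k, a, le_rfl, subset_rfl, hfr⟩
  have ha : (fun j => ⌊z j * 2 ^ k⌋) = a := funext fun j => by
    obtain ⟨hlo, hhi⟩ := mem_dyadicCube_iff.1 hz j
    refine Int.floor_eq_iff.2 ⟨hlo, hhi.lt_of_ne fun h => hfr ?_⟩
    exact mem_frontier_dyadicCube hz j (Or.inr h)
  refine ⟨k', _, hk, ha ▸ dyadicCube_floor_subset hk z, ?_⟩
  refine mem_frontier_dyadicCube (mem_dyadicCube_floor k' z) i (Or.inl ?_)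
  rw [hm, Int.floor_intCast]

end Dyadic

lemma exists_int_btwn_mul_two_zpow {p q : ℝ} (hpq : p < q) (k : ℤ) :
    ∃ k' ≥ k, ∃ m : ℤ, p * 2 ^ k' < m ∧ (m : ℝ) < q * 2 ^ k' := by
  obtain ⟨N, hN⟩ := pow_unbounded_of_one_lt (q - p)⁻¹ one_lt_two
  refine ⟨max k N, le_max_left _ _, ⌊p * 2 ^ max k (N : ℤ)⌋ + 1, ?_, ?_⟩
  · push_cast
    exact Int.lt_floor_add_one _
  · have hN' : (2 : ℝ) ^ N ≤ 2 ^ max k (N : ℤ) := by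
      rw [← zpow_natCast]; exact zpow_le_zpow_right₀ one_le_two (le_max_right _ _)
    have : 1 < 2 ^ max k (N : ℤ) * (q - p) := by
      rw [inv_lt_iff_one_lt_mul₀ (sub_pos.2 hpq)] at hN
      exact hN.trans_le (mul_le_mul_of_nonneg_right hN' (sub_pos.2 hpq).le)
    push_cast
    linarith [Int.floor_le (p * 2 ^ max k (N : ℤ))]

/-- The coordinate projections of a preconnected subset are intervals, and every nontrivial
interval contains a dyadic rational of generation at least `k`. -/
lemma isTotallyDisconnected_of_mul_two_zpow_ne_int {n : ℕ} {S : Set (EuclideanSpace ℝ (Fin n))}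
    (k : ℤ) (hS : ∀ z ∈ S, ∀ k' ≥ k, ∀ (i : Fin n) (m : ℤ), z i * 2 ^ k' ≠ m) :
    IsTotallyDisconnected S := by
  intro t hts ht x hx y hy
  by_contra hxy
  obtain ⟨i, hi⟩ : ∃ i, x i ≠ y i := by
    contrapose! hxy
    exact PiLp.ext hxy
  obtain ⟨k', hk', m, hlo, hhi⟩ := exists_int_btwn_mul_two_zpow (min_lt_max.2 hi) k
  have h2k : (0 : ℝ) < 2 ^ k' := by positivity
  have hproj : IsPreconnected ((fun z : EuclideanSpace ℝ (Fin n) => z i) '' t) :=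
    ht.image _ (by fun_prop)
  obtain ⟨z, hz, hzi⟩ : (m / 2 ^ k' : ℝ) ∈ (fun z : EuclideanSpace ℝ (Fin n) => z i) '' t := by
    refine hproj.ordConnected.uIcc_subset (Set.mem_image_of_mem _ hx)
      (Set.mem_image_of_mem _ hy) ?_
    rw [Set.uIcc, Set.mem_Icc, le_div_iff₀ h2k, div_le_iff₀ h2k]
    exact ⟨hlo.le, hhi.le⟩
  exact hS z (hts hz) k' hk' i m (by simp only at hzi; rw [hzi, div_mul_cancel₀ _ h2k.ne'])

lemma isTotallyDisconnected_of_disjoint_frontier_dyadicCube {n : ℕ} {k : ℤ} {a : Fin n → ℤ}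
    {L : Set (EuclideanSpace ℝ (Fin n))} (hLI : L ⊆ dyadicCube n k a)
    (hL : ∀ k' a', k ≤ k' → dyadicCube n k' a' ⊆ dyadicCube n k a →
      Disjoint L (frontier (dyadicCube n k' a'))) :
    IsTotallyDisconnected L :=
  isTotallyDisconnected_of_mul_two_zpow_ne_int k fun z hz _ hk' _ _ hm => by
    obtain ⟨k'', a', hk'', hsub, hfr⟩ := exists_dyadicCube_subset_mem_frontier (hLI hz) hk' hm
    exact Set.disjoint_left.1 (hL k'' a' hk'' hsub) hz hfr

theorem stmt_15_general (n d : ℕ) (hn : 2 ≤ n)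
    (Ω : Set (EuclideanSpace ℝ (Fin n)))
    (f : EuclideanSpace ℝ (Fin n) → EuclideanSpace ℝ (Fin d)) (hf : ContinuousOn f Ω)
    (φ : ℝ → ℝ)
    (K' : Set (EuclideanSpace ℝ (Fin n))) (hK'c : IsCompact K') (hK'Ω : K' ⊆ Ω)
    (hK'φ : hausdorffGauge φ K' = 0)
    (hfK' : 0 < μH[(n : ℝ)] (f '' K'))
    (k : ℤ) (a : Fin n → ℤ) (hKI : K' ⊆ dyadicCube n k a)
    (hbd : ∀ (k' : ℤ) (a' : Fin n → ℤ), k ≤ k' →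
      dyadicCube n k' a' ⊆ dyadicCube n k a →
      μH[(n : ℝ)] (f '' (frontier (dyadicCube n k' a') ∩ K')) = 0) :
    ∃ K : Set (EuclideanSpace ℝ (Fin n)), K ⊆ K' ∧ IsCompact K ∧ Perfect K ∧
      IsTotallyDisconnected K ∧ hausdorffGauge φ K = 0 ∧ 0 < μH[(n : ℝ)] (f '' K) := by
  have hn0 : (0 : ℝ) < n := by positivity
  let Subcube := {p : ℤ × (Fin n → ℤ) // k ≤ p.1 ∧ dyadicCube n p.1 p.2 ⊆ dyadicCube n k a}
  obtain ⟨L, hLK', hLc, hLB, hfL⟩ :=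
    exists_isCompact_subset_disjoint_hausdorffMeasure_image_pos hn0 hK'c (hf.mono hK'Ω) hfK'
      (B := fun J : Subcube => frontier (dyadicCube n J.1.1 J.1.2) ∩ K')
      fun J => hbd _ _ J.2.1 J.2.2
  obtain ⟨P, hPL, hP, hfP⟩ :=
    exists_perfect_subset_hausdorffMeasure_image_pos hn0 hLc.isClosed f hfL
  have hPK' : P ⊆ K' := hPL.trans hLK'
  have hPdisc : IsTotallyDisconnected P :=
    isTotallyDisconnected_of_disjoint_frontier_dyadicCube (hPK'.trans hKI) fun k' a' hk' hsub =>
      Set.disjoint_left.2 fun z hzP hz =>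
        Set.disjoint_left.1 (hLB ⟨(k', a'), hk', hsub⟩) (hPL hzP) ⟨hz, hPK' hzP⟩
  exact ⟨P, hPK', hLc.of_isClosed_subset hP.closed hPL, hP, hPdisc,
    measure_mono_null hPK' hK'φ, hfP⟩

theorem stmt_15 (n d : ℕ) (hn : 2 ≤ n)
    (Ω : Set (EuclideanSpace ℝ (Fin n))) (hΩ : IsOpen Ω)
    (f : EuclideanSpace ℝ (Fin n) → EuclideanSpace ℝ (Fin d)) (hf : ContinuousOn f Ω)
    (φ : ℝ → ℝ) (hφ : IsGauge φ)
    (K' : Set (EuclideanSpace ℝ (Fin n))) (hK'c : IsCompact K') (hK'Ω : K' ⊆ Ω)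
    (hK'φ : hausdorffGauge φ K' = 0)
    (hfK' : 0 < μH[(n : ℝ)] (f '' K'))
    (k : ℤ) (a : Fin n → ℤ) (hKI : K' ⊆ dyadicCube n k a)
    (hbd : ∀ (k' : ℤ) (a' : Fin n → ℤ), k ≤ k' →
      dyadicCube n k' a' ⊆ dyadicCube n k a →
      μH[(n : ℝ)] (f '' (frontier (dyadicCube n k' a') ∩ K')) = 0) :
    ∃ K : Set (EuclideanSpace ℝ (Fin n)), K ⊆ K' ∧ IsCompact K ∧ Perfect K ∧
      IsTotallyDisconnected K ∧ hausdorffGauge φ K = 0 ∧ 0 < μH[(n : ℝ)] (f '' K) :=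
  stmt_15_general n d hn Ω f hf φ K' hK'c hK'Ω hK'φ hfK' k a hKI hbd
end
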